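/- The map Φ sending an ultrametric tree of height N with k leaves (in the Ulam–Harris encoding, with leaves ℓ_1 ≤ … ≤ ℓ_k in lexicographic order) to the vector (|ℓ_1 ∧ ℓ_2|, …, |ℓ_{k-1} ∧ ℓ_k|) of generations of most recent common ancestors of consecutive leaves is a bijection from the set of such ultrametric trees onto {0, 1, …, N-1}^{k-1}. -/

import Mathlib

open Set

/-- Ulam–Harris trees: subsets of `⋃_n ℕ^n` containing the root, closed under
taking parents, with children of each vertex forming an initial segment. -/
def IsUHTree (τ : Set (List ℕ)) : Prop :=
  ([] ∈ τ) ∧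
  (∀ u : List ℕ, ∀ j : ℕ, u ++ [j] ∈ τ → u ∈ τ) ∧
  (∀ u ∈ τ, ∃ k : ℕ, ∀ i : ℕ, (u ++ [i] ∈ τ ↔ i < k))

/-- `u` is a leaf of `τ`. -/
def IsLeaf (τ : Set (List ℕ)) (u : List ℕ) : Prop :=
  u ∈ τ ∧ ∀ i : ℕ, u ++ [i] ∉ τ

/-- An ultrametric tree of height `N` with `k` leaves: a tree whose vertices
have generation at most `N`, all of whose leaves lie at generation `N`, with
exactly `k` leaves. -/
def IsUMTree (N k : ℕ) (τ : Set (List ℕ)) : Prop :=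
  IsUHTree τ ∧ (∀ u ∈ τ, u.length ≤ N) ∧
  (∀ u, IsLeaf τ u → u.length = N) ∧
  Set.ncard {u | IsLeaf τ u} = k

/-- Length of the longest common prefix `|u ∧ v|`. -/
def lcpLen : List ℕ → List ℕ → ℕ
  | a :: as, b :: bs => if a = b then lcpLen as bs + 1 else 0
  | _, _ => 0

/-- `u` is the `i`-th leaf of `τ` in the lexicographic (planar) order,
i.e. exactly `i` leaves are lexicographically smaller than `u`. -/
def NthLeaf (τ : Set (List ℕ)) (i : ℕ) (u : List ℕ) : Prop :=
  IsLeaf τ u ∧ Set.ncard {v | IsLeaf τ v ∧ List.Lex (· < ·) v u} = i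

set_option linter.unusedVariables false
set_option linter.unnecessarySimpa false

namespace CPPaux

lemma lcpLen_le_left : ∀ u v : List ℕ, lcpLen u v ≤ u.length
  | [], _ => by simp [lcpLen]
  | _ :: _, [] => by simp [lcpLen]
  | a :: as, b :: bs => by
    by_cases h : a = b <;> simp [lcpLen, h]
    exact lcpLen_le_left as bs

lemma lcpLen_comm : ∀ u v : List ℕ, lcpLen u v = lcpLen v u
  | [], [] => rfl
  | [], _ :: _ => rfl
  | _ :: _, [] => rfl
  | a :: as, b :: bs => by
    by_cases h : a = b
    · subst h; simp [lcpLen, lcpLen_comm as bs]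
    · simp [lcpLen, h, Ne.symm h]

lemma lcpLen_take_eq : ∀ u v : List ℕ, u.take (lcpLen u v) = v.take (lcpLen u v)
  | [], v => by simp [lcpLen]
  | _ :: _, [] => by simp [lcpLen]
  | a :: as, b :: bs => by
    by_cases h : a = b
    · subst h; simp [lcpLen, List.take_succ_cons, lcpLen_take_eq as bs]
    · simp [lcpLen, h]

lemma lcpLen_getD_ne : ∀ u v : List ℕ, lcpLen u v < u.length → lcpLen u v < v.length →
    u.getD (lcpLen u v) 0 ≠ v.getD (lcpLen u v) 0
  | [], v => by simp [lcpLen]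
  | _ :: _, [] => by simp [lcpLen]
  | a :: as, b :: bs => by
    by_cases h : a = b
    · subst h
      simp only [lcpLen, if_true, eq_self_iff_true, List.length_cons,
        Nat.add_lt_add_iff_right, List.getD_cons_succ]
      exact lcpLen_getD_ne as bs
    · intro _ _
      simpa [lcpLen, h] using h

lemma eq_of_lcpLen_eq : ∀ u v : List ℕ, u.length = v.length → lcpLen u v = u.length → u = v
  | [], [], _, _ => rfl
  | [], _ :: _, h, _ => by simp at h
  | _ :: _, [], h, _ => by simp at h
  | a :: as, b :: bs, h, h2 => by
    by_cases hab : a = b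
    · subst hab
      simp only [lcpLen, if_true, eq_self_iff_true, List.length_cons,
        Nat.add_right_cancel_iff] at h2
      simp only [List.length_cons, Nat.add_right_cancel_iff] at h
      rw [eq_of_lcpLen_eq as bs h h2]
    · simp [lcpLen, hab] at h2

lemma lcpLen_lt {u v : List ℕ} {N : ℕ} (hu : u.length = N) (hv : v.length = N)
    (hne : u ≠ v) : lcpLen u v < N := by
  rcases lt_or_eq_of_le (lcpLen_le_left u v) with h | h
  · omega
  · exact absurd (eq_of_lcpLen_eq u v (hu.trans hv.symm) h) hne

lemma getD_eq_of_take_eq {u v : List ℕ} {n p : ℕ} (h : u.take n = v.take n) (hp : p < n) :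
    u.getD p 0 = v.getD p 0 := by
  have h1 : (u.take n).getD p 0 = (v.take n).getD p 0 := by rw [h]
  rw [List.getD_eq_getElem?_getD, List.getD_eq_getElem?_getD, List.getElem?_take_of_lt hp,
    List.getElem?_take_of_lt hp] at h1
  rwa [List.getD_eq_getElem?_getD, List.getD_eq_getElem?_getD]

lemma le_lcpLen_of_take_eq : ∀ (p : ℕ) (u v : List ℕ), p ≤ u.length → p ≤ v.length →
    u.take p = v.take p → p ≤ lcpLen u v
  | 0, _, _, _, _, _ => Nat.zero_le _
  | p + 1, [], v, h, _, _ => by simp at h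
  | p + 1, _ :: _, [], _, h, _ => by simp at h
  | p + 1, a :: as, b :: bs, h1, h2, h3 => by
    simp only [List.take_succ_cons, List.cons.injEq] at h3
    obtain ⟨rfl, h3⟩ := h3
    simp only [lcpLen, if_true, eq_self_iff_true, Nat.add_le_add_iff_right]
    exact le_lcpLen_of_take_eq p as bs (by simpa using h1) (by simpa using h2) h3

lemma lcpLen_eq_of {u v : List ℕ} {p : ℕ} (hpu : p < u.length) (hpv : p < v.length)
    (ht : u.take p = v.take p) (hd : u.getD p 0 ≠ v.getD p 0) : lcpLen u v = p := by
  have h1 : p ≤ lcpLen u v := le_lcpLen_of_take_eq p u v hpu.le hpv.le ht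
  rcases lt_or_eq_of_le h1 with h | h
  · exact absurd (getD_eq_of_take_eq (lcpLen_take_eq u v) h) hd
  · exact h.symm

/-- Lex comparison from a common prefix and differing digit. -/
lemma lex_of_append {w s t : List ℕ} {x y : ℕ} (h : x < y) :
    (w ++ x :: s) < (w ++ y :: t) := by
  induction w with
  | nil => exact List.Lex.rel h
  | cons a w ih => exact List.Lex.cons ih

lemma lt_of_take_getD {u v : List ℕ} {p : ℕ} (hpu : p < u.length) (hpv : p < v.length)
    (ht : u.take p = v.take p) (hd : u.getD p 0 < v.getD p 0) : u < v := by
  have hu : u = u.take p ++ u.getD p 0 :: u.drop (p + 1) := by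
    rw [List.getD_eq_getElem _ _ hpu]
    conv_lhs => rw [← List.take_append_drop p u, List.drop_eq_getElem_cons hpu]
  have hv : v = v.take p ++ v.getD p 0 :: v.drop (p + 1) := by
    rw [List.getD_eq_getElem _ _ hpv]
    conv_lhs => rw [← List.take_append_drop p v, List.drop_eq_getElem_cons hpv]
  rw [hu, hv, ht]
  exact lex_of_append hd

lemma not_lt_replicate_zero : ∀ (n : ℕ) (u : List ℕ), u.length = n →
    ¬ (u < List.replicate n 0)
  | 0, u, h => by
    rw [List.length_eq_zero_iff] at h
    subst h
    intro hlt
    exact (List.not_lt_nil _) hlt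
  | n + 1, u, h => by
    match u with
    | a :: as =>
      intro hlt
      rw [List.replicate_succ] at hlt
      rcases hlt with _ | h2 | h3
      · exact absurd (by assumption : a < 0) (Nat.not_lt_zero a)
      · exact not_lt_replicate_zero n as (by simpa using h) (by assumption)

/-! ### more list helpers -/

lemma getD_append_cons : ∀ (w : List ℕ) (x : ℕ) (t : List ℕ),
    (w ++ x :: t).getD w.length 0 = x
  | [], x, t => rfl
  | a :: w, x, t => by simpa using getD_append_cons w x t

lemma getD_append_right_cons : ∀ (w : List ℕ) (x : ℕ) (t : List ℕ) (j : ℕ),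
    (w ++ x :: t).getD (w.length + 1 + j) 0 = t.getD j 0
  | [], x, t, j => by
    have h : (0 : ℕ) + 1 + j = j + 1 := by omega
    simp only [List.length_nil, h, List.nil_append, List.getD_cons_succ]
  | a :: w, x, t, j => by
    have h : (a :: w).length + 1 + j = (w.length + 1 + j) + 1 := by simp; omega
    rw [h]
    have h2 : a :: w ++ x :: t = a :: (w ++ x :: t) := rfl
    rw [h2, List.getD_cons_succ]
    exact getD_append_right_cons w x t j

lemma getD_replicate_zero (n q : ℕ) : (List.replicate n 0).getD q 0 = 0 := by
  induction n generalizing q with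
  | zero => simp [List.getD]
  | succ n ih =>
    cases q with
    | zero => simp [List.replicate_succ]
    | succ q => rw [List.replicate_succ, List.getD_cons_succ]; exact ih q

lemma take_succ_eq {l : List ℕ} {p : ℕ} (hp : p < l.length) :
    l.take (p + 1) = l.take p ++ [l.getD p 0] := by
  rw [List.take_succ, List.getD_eq_getElem _ _ hp, List.getElem?_eq_getElem hp]
  rfl

lemma exists_initseg (S : Set ℕ) (dc : ∀ c' c : ℕ, c' ≤ c → c ∈ S → c' ∈ S) (b : ℕ)
    (hb : ∀ c ∈ S, c ≤ b) : ∃ k : ℕ, ∀ i : ℕ, i ∈ S ↔ i < k := by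
  have hne : {n | n ∉ S}.Nonempty := ⟨b + 1, fun h => by have := hb _ h; omega⟩
  refine ⟨sInf {n | n ∉ S}, fun i => ⟨fun hi => ?_, fun hi => ?_⟩⟩
  · by_contra h
    push_neg at h
    exact Nat.sInf_mem hne (dc _ _ h hi)
  · by_contra h
    exact (Nat.sInf_le h : sInf {n | n ∉ S} ≤ i).not_gt hi

/-! ### the canonical leaf sequence -/

def leafSeq (N : ℕ) (a : ℕ → ℕ) : ℕ → List ℕ
  | 0 => List.replicate N 0
  | i + 1 => (leafSeq N a i).take (a i) ++
      ((leafSeq N a i).getD (a i) 0 + 1) :: List.replicate (N - a i - 1) 0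

section LeafSeq

variable {N : ℕ} {a : ℕ → ℕ}

lemma leafSeq_length (ha : ∀ j, a j < N) : ∀ i, (leafSeq N a i).length = N := by
  intro i
  induction i with
  | zero => simp [leafSeq]
  | succ i ih =>
    simp only [leafSeq, List.length_append, List.length_take, ih, List.length_cons,
      List.length_replicate]
    have := ha i
    omega

lemma take_len (ha : ∀ j, a j < N) (i : ℕ) :
    ((leafSeq N a i).take (a i)).length = a i := by
  rw [List.length_take, leafSeq_length ha i]; exact min_eq_left (ha i).le

lemma leafSeq_take_succ (ha : ∀ j, a j < N) (i : ℕ) :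
    (leafSeq N a (i + 1)).take (a i) = (leafSeq N a i).take (a i) := by
  rw [leafSeq, List.take_append_of_le_length (by rw [take_len ha]),
    List.take_take, min_self]

lemma leafSeq_getD_succ_self (ha : ∀ j, a j < N) (i : ℕ) :
    (leafSeq N a (i + 1)).getD (a i) 0 = (leafSeq N a i).getD (a i) 0 + 1 := by
  have h := getD_append_cons ((leafSeq N a i).take (a i))
    ((leafSeq N a i).getD (a i) 0 + 1) (List.replicate (N - a i - 1) 0)
  rw [take_len ha] at h
  rw [leafSeq]
  exact h

lemma leafSeq_getD_succ_gt (ha : ∀ j, a j < N) (i : ℕ) {q : ℕ} (hq : a i < q) :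
    (leafSeq N a (i + 1)).getD q 0 = 0 := by
  have h := getD_append_right_cons ((leafSeq N a i).take (a i))
    ((leafSeq N a i).getD (a i) 0 + 1) (List.replicate (N - a i - 1) 0) (q - a i - 1)
  rw [take_len ha] at h
  have hq' : a i + 1 + (q - a i - 1) = q := by omega
  rw [hq', getD_replicate_zero] at h
  rw [leafSeq]
  exact h

lemma leafSeq_lt_succ (ha : ∀ j, a j < N) (i : ℕ) :
    leafSeq N a i < leafSeq N a (i + 1) := by
  refine lt_of_take_getD (p := a i) ?_ ?_ (leafSeq_take_succ ha i).symm ?_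
  · rw [leafSeq_length ha]; exact ha i
  · rw [leafSeq_length ha]; exact ha i
  · rw [leafSeq_getD_succ_self ha]; omega

lemma leafSeq_strictMono (ha : ∀ j, a j < N) : StrictMono (leafSeq N a) :=
  strictMono_nat_of_lt_succ (leafSeq_lt_succ ha)

lemma leafSeq_lcpLen (ha : ∀ j, a j < N) (i : ℕ) :
    lcpLen (leafSeq N a i) (leafSeq N a (i + 1)) = a i := by
  refine lcpLen_eq_of ?_ ?_ (leafSeq_take_succ ha i).symm ?_
  · rw [leafSeq_length ha]; exact ha i
  · rw [leafSeq_length ha]; exact ha i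
  · rw [leafSeq_getD_succ_self ha]; omega

end LeafSeq

/-! ### the tree of prefixes of the canonical leaves -/

def psiTree (N : ℕ) (a : ℕ → ℕ) (k : ℕ) : Set (List ℕ) :=
  {u | ∃ i < k, u <+: leafSeq N a i}

section Psi

variable {N : ℕ} {a : ℕ → ℕ} {k : ℕ}

/-- Children in the canonical leaf sequence are downward closed. -/
lemma leafSeq_children_dc (ha : ∀ j, a j < N) :
    ∀ (i q c : ℕ), q < N → c < (leafSeq N a i).getD q 0 →
    ∃ j ≤ i, (leafSeq N a i).take q ++ [c] <+: leafSeq N a j := by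
  intro i
  induction i with
  | zero =>
    intro q c _ hc
    rw [show leafSeq N a 0 = List.replicate N 0 from rfl, getD_replicate_zero] at hc
    omega
  | succ i ih =>
    intro q c hq hc
    rcases lt_trichotomy q (a i) with h | h | h
    · -- q < a i : digits and take agree with stage i
      have htq : (leafSeq N a (i + 1)).take q = (leafSeq N a i).take q := by
        have h1 : (leafSeq N a (i + 1)).take q = ((leafSeq N a (i + 1)).take (a i)).take q := by
          rw [List.take_take, min_eq_left h.le]
        rw [h1, leafSeq_take_succ ha i, List.take_take, min_eq_left h.le]
      have hdq : (leafSeq N a (i + 1)).getD q 0 = (leafSeq N a i).getD q 0 :=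
        getD_eq_of_take_eq (leafSeq_take_succ ha i) h
      rw [hdq] at hc
      obtain ⟨j, hj, hpre⟩ := ih q c hq hc
      exact ⟨j, hj.trans (Nat.le_succ i), by rwa [htq]⟩
    · -- q = a i
      subst h
      rw [leafSeq_getD_succ_self ha] at hc
      rcases Nat.lt_succ_iff_lt_or_eq.mp hc with hc' | hc'
      · obtain ⟨j, hj, hpre⟩ := ih (a i) c hq hc'
        exact ⟨j, hj.trans (Nat.le_succ i), by rwa [leafSeq_take_succ ha]⟩
      · subst hc'
        refine ⟨i, Nat.le_succ i, ?_⟩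
        rw [leafSeq_take_succ ha,
          ← take_succ_eq (by rw [leafSeq_length ha]; exact hq)]
        exact List.take_prefix _ _
    · -- q > a i : digit is 0
      rw [leafSeq_getD_succ_gt ha i h] at hc
      omega

lemma psiTree_mem_length (ha : ∀ j, a j < N) {u : List ℕ} (hu : u ∈ psiTree N a k) :
    u.length ≤ N := by
  obtain ⟨i, _, hpre⟩ := hu
  have := hpre.length_le
  rwa [leafSeq_length ha] at this

/-- characterize extensions: if `u ++ [c]` is a vertex then `u` is a take of a leaf
and `c` the corresponding digit. -/
lemma psiTree_ext_char (ha : ∀ j, a j < N) {u : List ℕ} {c : ℕ}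
    (h : u ++ [c] ∈ psiTree N a k) :
    ∃ i < k, u.length < N ∧ u = (leafSeq N a i).take u.length ∧
      c = (leafSeq N a i).getD u.length 0 := by
  obtain ⟨i, hik, hpre⟩ := h
  have hlen : u.length + 1 ≤ N := by
    have := hpre.length_le
    rw [leafSeq_length ha] at this
    simpa using this
  have heq : u ++ [c] = (leafSeq N a i).take (u.length + 1) := by
    have := List.prefix_iff_eq_take.mp hpre
    simpa using this
  rw [take_succ_eq (by rw [leafSeq_length ha]; omega)] at heq
  have h2 := List.append_inj' heq rfl
  exact ⟨i, hik, by omega, h2.1, (List.cons.injEq _ _ _ _ ▸ h2.2).1⟩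

lemma psiTree_isUHTree (ha : ∀ j, a j < N) (hk : 1 ≤ k) : IsUHTree (psiTree N a k) := by
  refine ⟨⟨0, hk, List.nil_prefix⟩, ?_, ?_⟩
  · rintro u j ⟨i, hik, hpre⟩
    exact ⟨i, hik, (List.prefix_append u [j]).trans hpre⟩
  · intro u hu
    have hdc : ∀ c' c : ℕ, c' ≤ c → (u ++ [c] ∈ psiTree N a k) → u ++ [c'] ∈ psiTree N a k := by
      intro c' c hle hc
      rcases eq_or_lt_of_le hle with rfl | hlt
      · exact hc
      obtain ⟨i, hik, hlN, hu_eq, hc_eq⟩ := psiTree_ext_char ha hc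
      obtain ⟨j, hj, hpre⟩ := leafSeq_children_dc ha i u.length c' hlN (hc_eq ▸ hlt)
      exact ⟨j, lt_of_le_of_lt hj hik, by rwa [← hu_eq] at hpre⟩
    have hbd : ∀ c : ℕ, (u ++ [c] ∈ psiTree N a k) →
        c ≤ (Finset.range k).sup (fun i => (leafSeq N a i).getD u.length 0) := by
      intro c hc
      obtain ⟨i, hik, _, _, hc_eq⟩ := psiTree_ext_char ha hc
      exact hc_eq ▸ Finset.le_sup (f := fun i => (leafSeq N a i).getD u.length 0) (Finset.mem_range.mpr hik)
    exact exists_initseg {c | u ++ [c] ∈ psiTree N a k} hdc _ hbd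

lemma psiTree_isLeaf_iff (ha : ∀ j, a j < N) (hk : 1 ≤ k) {u : List ℕ} :
    IsLeaf (psiTree N a k) u ↔ ∃ i < k, u = leafSeq N a i := by
  constructor
  · rintro ⟨⟨i, hik, hpre⟩, hnc⟩
    refine ⟨i, hik, ?_⟩
    rcases lt_or_eq_of_le (hpre.length_le) with hlt | heq
    · exfalso
      apply hnc ((leafSeq N a i).getD u.length 0)
      refine ⟨i, hik, ?_⟩
      have heq : u ++ [(leafSeq N a i).getD u.length 0] = (leafSeq N a i).take (u.length + 1) := by
        rw [take_succ_eq hlt]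
        congr 1
        exact (List.prefix_iff_eq_take.mp hpre)
      rw [heq]
      exact List.take_prefix _ _
    · exact hpre.eq_of_length heq
  · rintro ⟨i, hik, rfl⟩
    refine ⟨⟨i, hik, List.prefix_refl _⟩, fun c hc => ?_⟩
    have := psiTree_mem_length ha hc
    rw [List.length_append, leafSeq_length ha] at this
    simpa using this

lemma psiTree_leaves_eq (ha : ∀ j, a j < N) (hk : 1 ≤ k) :
    {u | IsLeaf (psiTree N a k) u} = leafSeq N a '' Set.Iio k := by
  ext u
  simp only [Set.mem_setOf_eq, psiTree_isLeaf_iff ha hk, Set.mem_image, Set.mem_Iio]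
  exact ⟨fun ⟨i, h1, h2⟩ => ⟨i, h1, h2.symm⟩, fun ⟨i, h1, h2⟩ => ⟨i, h1, h2.symm⟩⟩

lemma ncard_image_leafSeq (ha : ∀ j, a j < N) (m : ℕ) :
    (leafSeq N a '' Set.Iio m).ncard = m := by
  rw [Set.ncard_image_of_injOn ((leafSeq_strictMono ha).injective.injOn),
    ← Finset.coe_Iio, Set.ncard_coe_finset, Nat.card_Iio]

lemma psiTree_isUMTree (ha : ∀ j, a j < N) (hk : 1 ≤ k) : IsUMTree N k (psiTree N a k) := by
  refine ⟨psiTree_isUHTree ha hk, fun u hu => psiTree_mem_length ha hu, ?_, ?_⟩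
  · intro u hu
    obtain ⟨i, _, rfl⟩ := (psiTree_isLeaf_iff ha hk).mp hu
    exact leafSeq_length ha i
  · rw [psiTree_leaves_eq ha hk, ncard_image_leafSeq ha]

lemma psiTree_nthLeaf (ha : ∀ j, a j < N) (hk : 1 ≤ k) {i : ℕ} (hik : i < k) :
    NthLeaf (psiTree N a k) i (leafSeq N a i) := by
  refine ⟨(psiTree_isLeaf_iff ha hk).mpr ⟨i, hik, rfl⟩, ?_⟩
  have hset : {v | IsLeaf (psiTree N a k) v ∧ List.Lex (· < ·) v (leafSeq N a i)} =
      leafSeq N a '' Set.Iio i := by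
    ext v
    simp only [Set.mem_setOf_eq, psiTree_isLeaf_iff ha hk, Set.mem_image, Set.mem_Iio]
    constructor
    · rintro ⟨⟨j, hjk, rfl⟩, hlt⟩
      exact ⟨j, (leafSeq_strictMono ha).lt_iff_lt.mp hlt, rfl⟩
    · rintro ⟨j, hji, rfl⟩
      exact ⟨⟨j, hji.trans hik, rfl⟩, (leafSeq_strictMono ha).lt_iff_lt.mpr hji⟩
  rw [hset, ncard_image_leafSeq ha]

end Psi

/-! ### structure theory of an arbitrary ultrametric tree -/

section Tau

variable {N k : ℕ} {τ : Set (List ℕ)}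

lemma prefix_mem (h : IsUHTree τ) {u : List ℕ} : ∀ t : List ℕ, u ++ t ∈ τ → u ∈ τ := by
  intro t
  induction t using List.reverseRecOn with
  | nil => intro h2; simpa using h2
  | append_singleton t j ih =>
    intro h2
    rw [← List.append_assoc] at h2
    exact ih (h.2.1 _ _ h2)

lemma prefix_mem' (h : IsUHTree τ) {u v : List ℕ} (hv : v ∈ τ) (huv : u <+: v) : u ∈ τ := by
  obtain ⟨t, rfl⟩ := huv
  exact prefix_mem h t hv

lemma exists_leaf_ext (h : IsUMTree N k τ) {u : List ℕ} (hu : u ∈ τ) :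
    ∃ ℓ, IsLeaf τ ℓ ∧ u <+: ℓ := by
  suffices hs : ∀ m : ℕ, ∀ u ∈ τ, N - u.length ≤ m → ∃ ℓ, IsLeaf τ ℓ ∧ u <+: ℓ from
    hs N u hu (by omega)
  intro m
  induction m with
  | zero =>
    intro u hu hm
    refine ⟨u, ⟨hu, fun i hi => ?_⟩, List.prefix_refl u⟩
    have h1 := h.2.1 _ hi
    rw [List.length_append, List.length_singleton] at h1
    omega
  | succ m ih =>
    intro u hu hm
    by_cases hL : ∀ i : ℕ, u ++ [i] ∉ τ
    · exact ⟨u, ⟨hu, hL⟩, List.prefix_refl u⟩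
    · push_neg at hL
      obtain ⟨i, hi⟩ := hL
      have hlen : (u ++ [i]).length = u.length + 1 := by simp
      obtain ⟨ℓ, h1, h2⟩ := ih (u ++ [i]) hi (by rw [hlen]; omega)
      exact ⟨ℓ, h1, (List.prefix_append u [i]).trans h2⟩

/-- Extend a vertex `w ++ [x]` to a leaf through it, recording take/digit data. -/
lemma leaf_through (h : IsUMTree N k τ) {w : List ℕ} {x : ℕ} (hw : w ++ [x] ∈ τ) :
    ∃ ℓ', IsLeaf τ ℓ' ∧ ℓ'.length = N ∧ ℓ'.take w.length = w ∧ ℓ'.getD w.length 0 = x := by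
  obtain ⟨ℓ', hleaf, hpre⟩ := exists_leaf_ext h hw
  have hN' : ℓ'.length = N := h.2.2.1 _ hleaf
  have heq : w ++ [x] = ℓ'.take (w.length + 1) := by
    have h1 := List.prefix_iff_eq_take.mp hpre
    rwa [List.length_append, List.length_singleton] at h1
  have hwlen : w.length + 1 ≤ ℓ'.length := by
    have := hpre.length_le
    rw [List.length_append, List.length_singleton] at this
    omega
  refine ⟨ℓ', hleaf, hN', ?_, ?_⟩
  · have : ℓ'.take w.length = (ℓ'.take (w.length + 1)).take w.length := by
      rw [List.take_take, min_eq_left (by omega)]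
    rw [this, ← heq, List.take_append_of_le_length le_rfl, List.take_length]
  · have htk : ℓ'.take (w.length + 1) = (w ++ [x]).take (w.length + 1) := by
      rw [← heq, List.take_of_length_le (by simp)]
    have := getD_eq_of_take_eq htk (Nat.lt_succ_self _)
    rw [this, getD_append_cons]

lemma leavesFinite (h : IsUMTree N k τ) (hk : 1 ≤ k) : {u | IsLeaf τ u}.Finite := by
  by_contra hinf
  have h0 := (Set.Infinite.ncard hinf)
  rw [h.2.2.2] at h0
  omega

/-- the order isomorphism enumerating the leaves lexicographically -/
noncomputable def leafIso (h : IsUMTree N k τ) (hk : 1 ≤ k) :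
    Fin k ≃o {x // x ∈ (leavesFinite h hk).toFinset} :=
  Finset.orderIsoOfFin _ (by
    rw [← Set.ncard_eq_toFinset_card _ (leavesFinite h hk)]; exact h.2.2.2)

/-- the `i`-th leaf -/
noncomputable def leafFin (h : IsUMTree N k τ) (hk : 1 ≤ k) (i : Fin k) : List ℕ :=
  (leafIso h hk i).1

lemma leafFin_isLeaf (h : IsUMTree N k τ) (hk : 1 ≤ k) (i : Fin k) :
    IsLeaf τ (leafFin h hk i) := by
  have := (leafIso h hk i).2
  rwa [Set.Finite.mem_toFinset] at this

lemma leafFin_length (h : IsUMTree N k τ) (hk : 1 ≤ k) (i : Fin k) :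
    (leafFin h hk i).length = N :=
  h.2.2.1 _ (leafFin_isLeaf h hk i)

lemma leafFin_strictMono (h : IsUMTree N k τ) (hk : 1 ≤ k) :
    StrictMono (leafFin h hk) := by
  intro i j hij
  exact Subtype.coe_lt_coe.mpr ((leafIso h hk).strictMono hij)

lemma leafFin_surj (h : IsUMTree N k τ) (hk : 1 ≤ k) {u : List ℕ} (hu : IsLeaf τ u) :
    ∃ i, u = leafFin h hk i := by
  obtain ⟨i, hi⟩ := (leafIso h hk).surjective ⟨u, (Set.Finite.mem_toFinset _).mpr hu⟩
  exact ⟨i, by rw [leafFin, hi]⟩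

lemma ncard_lt_leafFin (h : IsUMTree N k τ) (hk : 1 ≤ k) (j : Fin k) :
    Set.ncard {v | IsLeaf τ v ∧ List.Lex (· < ·) v (leafFin h hk j)} = j := by
  have hset : {v | IsLeaf τ v ∧ List.Lex (· < ·) v (leafFin h hk j)} =
      leafFin h hk '' Set.Iio j := by
    ext v
    simp only [Set.mem_setOf_eq, Set.mem_image, Set.mem_Iio]
    constructor
    · rintro ⟨hleaf, hlt⟩
      obtain ⟨j', rfl⟩ := leafFin_surj h hk hleaf
      exact ⟨j', (leafFin_strictMono h hk).lt_iff_lt.mp hlt, rfl⟩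
    · rintro ⟨j', hj', rfl⟩
      exact ⟨leafFin_isLeaf h hk j', (leafFin_strictMono h hk).lt_iff_lt.mpr hj'⟩
  rw [hset, Set.ncard_image_of_injOn ((leafFin_strictMono h hk).injective.injOn),
    ← Finset.coe_Iio, Set.ncard_coe_finset, Fin.card_Iio]

lemma nthLeaf_iff (h : IsUMTree N k τ) (hk : 1 ≤ k) (i : ℕ) (u : List ℕ) :
    NthLeaf τ i u ↔ ∃ hi : i < k, u = leafFin h hk ⟨i, hi⟩ := by
  constructor
  · rintro ⟨hleaf, hcount⟩
    obtain ⟨j, rfl⟩ := leafFin_surj h hk hleaf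
    have hj := ncard_lt_leafFin h hk j
    have hij : i = (j : ℕ) := by rw [← hcount, hj]
    subst hij
    exact ⟨j.isLt, rfl⟩
  · rintro ⟨hi, rfl⟩
    exact ⟨leafFin_isLeaf h hk _, ncard_lt_leafFin h hk ⟨i, hi⟩⟩

lemma replicate_isLeaf (h : IsUMTree N k τ) : IsLeaf τ (List.replicate N 0) := by
  have hmem : ∀ t, t ≤ N → List.replicate t 0 ∈ τ := by
    intro t
    induction t with
    | zero => intro _; simpa using h.1.1
    | succ t ih =>
      intro ht
      have h1 : List.replicate t 0 ∈ τ := ih (by omega)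
      obtain ⟨kc, hkc⟩ := h.1.2.2 _ h1
      have hkc0 : 0 < kc := by
        by_contra h0
        push_neg at h0
        have hleaf : IsLeaf τ (List.replicate t 0) :=
          ⟨h1, fun i hi => by have := (hkc i).mp hi; omega⟩
        have := h.2.2.1 _ hleaf
        rw [List.length_replicate] at this
        omega
      have := (hkc 0).mpr hkc0
      rwa [← List.replicate_succ'] at this
  refine ⟨hmem N le_rfl, fun i hi => ?_⟩
  have := h.2.1 _ hi
  rw [List.length_append, List.length_replicate, List.length_singleton] at this
  omega

lemma leafFin_zero (h : IsUMTree N k τ) (hk : 1 ≤ k) :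
    leafFin h hk ⟨0, hk⟩ = List.replicate N 0 := by
  obtain ⟨j, hj⟩ := leafFin_surj h hk (replicate_isLeaf h)
  have h1 : leafFin h hk ⟨0, hk⟩ ≤ leafFin h hk j :=
    (leafFin_strictMono h hk).monotone (by simp [Fin.le_def])
  rw [← hj] at h1
  have h2 : ¬ (leafFin h hk ⟨0, hk⟩ < List.replicate N 0) :=
    not_lt_replicate_zero N _ (leafFin_length h hk _)
  exact le_antisymm h1 (le_of_not_gt h2)

/-- The key structure lemma: the `(i+1)`-st leaf is obtained from the `i`-th by
keeping the common prefix, incrementing the next digit, and padding by zeros. -/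
lemma leafFin_succ_eq (h : IsUMTree N k τ) (hk : 1 ≤ k) {i : ℕ} (hi : i + 1 < k) :
    leafFin h hk ⟨i + 1, hi⟩ =
      (leafFin h hk ⟨i, by omega⟩).take
          (lcpLen (leafFin h hk ⟨i, by omega⟩) (leafFin h hk ⟨i + 1, hi⟩)) ++
        ((leafFin h hk ⟨i, by omega⟩).getD
          (lcpLen (leafFin h hk ⟨i, by omega⟩) (leafFin h hk ⟨i + 1, hi⟩)) 0 + 1) ::
        List.replicate
          (N - lcpLen (leafFin h hk ⟨i, by omega⟩) (leafFin h hk ⟨i + 1, hi⟩) - 1) 0 := by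
  set u := leafFin h hk ⟨i, by omega⟩ with hu_def
  set v := leafFin h hk ⟨i + 1, hi⟩ with hv_def
  set p := lcpLen u v with hp_def
  have hu_leaf : IsLeaf τ u := leafFin_isLeaf h hk _
  have hv_leaf : IsLeaf τ v := leafFin_isLeaf h hk _
  have hu_len : u.length = N := leafFin_length h hk _
  have hv_len : v.length = N := leafFin_length h hk _
  have huv : u < v := leafFin_strictMono h hk (by simp [Fin.lt_def])
  have hne : u ≠ v := ne_of_lt huv
  have hpN : p < N := lcpLen_lt hu_len hv_len hne
  have ht : u.take p = v.take p := lcpLen_take_eq u v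
  have hdne : u.getD p 0 ≠ v.getD p 0 :=
    lcpLen_getD_ne u v (by omega) (by omega)
  have hdlt : u.getD p 0 < v.getD p 0 := by
    rcases lt_trichotomy (u.getD p 0) (v.getD p 0) with hcase | hcase | hcase
    · exact hcase
    · exact absurd hcase hdne
    · exact absurd (lt_of_take_getD (by omega) (by omega) ht.symm hcase) (lt_asymm huv)
  have hbetween : ∀ ℓ', IsLeaf τ ℓ' → u < ℓ' → ℓ' < v → False := by
    intro ℓ' hℓ hlt1 hlt2
    obtain ⟨j, rfl⟩ := leafFin_surj h hk hℓ
    have h1 := (leafFin_strictMono h hk).lt_iff_lt.mp hlt1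
    have h2 := (leafFin_strictMono h hk).lt_iff_lt.mp hlt2
    rw [Fin.lt_def] at h1 h2
    simp at h1 h2
    omega
  have hwlen : (u.take p).length = p := by rw [List.length_take]; omega
  -- the digit of `v` after the common prefix is one more than that of `u`
  have hdv : v.getD p 0 = u.getD p 0 + 1 := by
    by_contra hcon
    have hlt : u.getD p 0 + 1 < v.getD p 0 := by omega
    have hvp : v.take (p + 1) = u.take p ++ [v.getD p 0] := by
      rw [take_succ_eq (by omega : p < v.length), ← ht]
    have hw1 : u.take p ++ [v.getD p 0] ∈ τ := by
      rw [← hvp]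
      exact prefix_mem' h.1 hv_leaf.1 (List.take_prefix _ _)
    obtain ⟨kc, hkc⟩ := h.1.2.2 (u.take p) (prefix_mem' h.1 hw1 (List.prefix_append _ _))
    have hw2 : u.take p ++ [u.getD p 0 + 1] ∈ τ :=
      (hkc _).mpr (lt_trans hlt ((hkc _).mp hw1))
    obtain ⟨ℓ', hl, hlN, hltake, hlgetD⟩ := leaf_through h hw2
    rw [hwlen] at hltake hlgetD
    have h1 : u < ℓ' :=
      lt_of_take_getD (by omega) (by omega) hltake.symm (by rw [hlgetD]; omega)
    have h2 : ℓ' < v :=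
      lt_of_take_getD (p := p) (by omega) (by omega) (by rw [hltake, ht]) (by rw [hlgetD]; omega)
    exact hbetween ℓ' hl h1 h2
  -- all digits of `v` beyond the common prefix vanish
  have hzero : ∀ q, p < q → q < N → v.getD q 0 = 0 := by
    intro q hpq hqN
    by_contra hc
    have hcpos : 0 < v.getD q 0 := Nat.pos_of_ne_zero hc
    have hwq : (v.take q).length = q := by rw [List.length_take]; omega
    have hvq : v.take q ++ [v.getD q 0] ∈ τ := by
      rw [← take_succ_eq (by omega : q < v.length)]
      exact prefix_mem' h.1 hv_leaf.1 (List.take_prefix _ _)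
    obtain ⟨kc, hkc⟩ := h.1.2.2 (v.take q) (prefix_mem' h.1 hvq (List.prefix_append _ _))
    have h0 : v.take q ++ [0] ∈ τ := by
      refine (hkc 0).mpr ?_
      have := (hkc _).mp hvq
      omega
    obtain ⟨ℓ', hl, hlN, hltake, hlgetD⟩ := leaf_through h h0
    rw [hwq] at hltake hlgetD
    have h1 : ℓ' < v :=
      lt_of_take_getD (p := q) (by omega) (by omega) (by rw [hltake]) (by rw [hlgetD]; omega)
    have h2take : ℓ'.take p = u.take p := by
      calc ℓ'.take p = (ℓ'.take q).take p := by rw [List.take_take, min_eq_left hpq.le]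
        _ = (v.take q).take p := by rw [hltake]
        _ = v.take p := by rw [List.take_take, min_eq_left hpq.le]
        _ = u.take p := ht.symm
    have h2d : ℓ'.getD p 0 = v.getD p 0 := getD_eq_of_take_eq (by rw [hltake]) hpq
    have h2 : u < ℓ' :=
      lt_of_take_getD (by omega) (by omega) h2take.symm (by rw [h2d, hdv]; omega)
    exact hbetween ℓ' hl h2 h1
  -- reconstruct `v`
  have h1 : v.take (p + 1) = u.take p ++ [u.getD p 0 + 1] := by
    rw [take_succ_eq (by omega : p < v.length), ← ht, hdv]
  have h2 : v.drop (p + 1) = List.replicate (N - p - 1) 0 := by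
    rw [List.eq_replicate_iff]
    refine ⟨by rw [List.length_drop, hv_len]; omega, ?_⟩
    intro b hb
    rw [List.mem_iff_getElem] at hb
    obtain ⟨j, hj, rfl⟩ := hb
    rw [List.length_drop, hv_len] at hj
    have hq : p + 1 + j < N := by omega
    have hz := hzero (p + 1 + j) (by omega) hq
    rw [List.getD_eq_getElem _ _ (by omega)] at hz
    rw [List.getElem_drop]
    exact hz
  calc v = v.take (p + 1) ++ v.drop (p + 1) := (List.take_append_drop _ _).symm
    _ = (u.take p ++ [u.getD p 0 + 1]) ++ List.replicate (N - p - 1) 0 := by rw [h1, h2]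
    _ = u.take p ++ (u.getD p 0 + 1) :: List.replicate (N - p - 1) 0 := by simp

/-- the vector of consecutive lcp lengths of a tree, as a function on all of `ℕ` -/
noncomputable def aOf (h : IsUMTree N k τ) (hk : 1 ≤ k) : ℕ → ℕ :=
  fun j => if hj : j + 1 < k then
    lcpLen (leafFin h hk ⟨j, by omega⟩) (leafFin h hk ⟨j + 1, hj⟩) else 0

lemma aOf_lt (hN : 1 ≤ N) (h : IsUMTree N k τ) (hk : 1 ≤ k) : ∀ j, aOf h hk j < N := by
  intro j
  unfold aOf
  split
  · apply lcpLen_lt (leafFin_length h hk _) (leafFin_length h hk _)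
    exact ne_of_lt (leafFin_strictMono h hk (by simp [Fin.lt_def]))
  · omega

lemma leafFin_eq_leafSeq (hN : 1 ≤ N) (h : IsUMTree N k τ) (hk : 1 ≤ k) :
    ∀ i (hi : i < k), leafFin h hk ⟨i, hi⟩ = leafSeq N (aOf h hk) i := by
  intro i
  induction i with
  | zero => intro hi; exact leafFin_zero h hk
  | succ i ih =>
    intro hi
    have hii : i < k := by omega
    have ha : aOf h hk i = lcpLen (leafFin h hk ⟨i, hii⟩) (leafFin h hk ⟨i + 1, hi⟩) :=
      dif_pos hi
    rw [leafSeq, ← ih hii, ha]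
    exact leafFin_succ_eq h hk hi

lemma tau_eq_psi (hN : 1 ≤ N) (h : IsUMTree N k τ) (hk : 1 ≤ k) :
    τ = psiTree N (aOf h hk) k := by
  ext w
  constructor
  · intro hw
    obtain ⟨ℓ, hleaf, hpre⟩ := exists_leaf_ext h hw
    obtain ⟨j, rfl⟩ := leafFin_surj h hk hleaf
    refine ⟨j.1, j.isLt, ?_⟩
    rw [← leafFin_eq_leafSeq hN h hk j.1 j.isLt]
    exact hpre
  · rintro ⟨i, hik, hpre⟩
    rw [← leafFin_eq_leafSeq hN h hk i hik] at hpre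
    exact prefix_mem' h.1 (leafFin_isLeaf h hk _).1 hpre

end Tau

end CPPaux

open CPPaux in
/-- The map `Φ` sending an ultrametric tree of height `N` with `k` leaves
`ℓ_1 ≤ ⋯ ≤ ℓ_k` to the vector `(|ℓ_1 ∧ ℓ_2|, …, |ℓ_{k-1} ∧ ℓ_k|)` is a
bijection onto `{0,…,N-1}^{k-1}`. -/
theorem ultrametric_tree_CPP_bijection (N k : ℕ) (hN : 1 ≤ N) (hk : 1 ≤ k) :
    ∃ Φ : {τ : Set (List ℕ) // IsUMTree N k τ} → (Fin (k - 1) → Fin N),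
      (∀ (τ : {τ : Set (List ℕ) // IsUMTree N k τ}) (i : Fin (k - 1))
          (u v : List ℕ), NthLeaf τ.1 i u → NthLeaf τ.1 (i + 1) v →
          (Φ τ i : ℕ) = lcpLen u v) ∧
      Function.Bijective Φ := by
  classical
  set Φ : {τ : Set (List ℕ) // IsUMTree N k τ} → (Fin (k - 1) → Fin N) :=
    fun τ i => ⟨aOf τ.2 hk i.1, aOf_lt hN τ.2 hk i.1⟩ with hΦ
  have hspec : ∀ (τ : {τ : Set (List ℕ) // IsUMTree N k τ}) (i : Fin (k - 1))
      (u v : List ℕ), NthLeaf τ.1 i u → NthLeaf τ.1 (i + 1) v →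
      (Φ τ i : ℕ) = lcpLen u v := by
    intro τ i u v hu hv
    obtain ⟨hiu, rfl⟩ := (nthLeaf_iff τ.2 hk i.1 u).mp hu
    obtain ⟨hiv, rfl⟩ := (nthLeaf_iff τ.2 hk (i.1 + 1) v).mp hv
    show aOf τ.2 hk i.1 = _
    rw [aOf, dif_pos hiv]
  refine ⟨Φ, hspec, ?_, ?_⟩
  · -- injectivity
    intro τ1 τ2 hfeq
    have haeq : aOf τ1.2 hk = aOf τ2.2 hk := by
      funext j
      by_cases hj : j + 1 < k
      · have h1 := congrArg Fin.val (congrFun hfeq ⟨j, by omega⟩)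
        exact h1
      · simp [aOf, hj]
    apply Subtype.ext
    rw [tau_eq_psi hN τ1.2 hk, tau_eq_psi hN τ2.2 hk, haeq]
  · -- surjectivity
    intro b
    set a : ℕ → ℕ := fun j => if hj : j < k - 1 then (b ⟨j, hj⟩ : ℕ) else 0 with hadef
    have ha : ∀ j, a j < N := by
      intro j
      by_cases hj : j < k - 1 <;> simp only [hadef, hj, dif_pos, dif_neg, not_false_iff]
      · exact (b ⟨j, hj⟩).isLt
      · exact hN
    refine ⟨⟨psiTree N a k, psiTree_isUMTree ha hk⟩, ?_⟩
    funext i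
    apply Fin.ext
    have hik : (i : ℕ) < k := by omega
    have hik1 : (i : ℕ) + 1 < k := by omega
    have h1 := psiTree_nthLeaf ha hk hik
    have h2 := psiTree_nthLeaf ha hk hik1
    have h3 := hspec ⟨psiTree N a k, psiTree_isUMTree ha hk⟩ i _ _ h1 h2
    rw [h3, leafSeq_lcpLen ha]
    show a i.1 = (b i : ℕ)
    rw [hadef]
    simp only [i.isLt, dif_pos]
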